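/- arXiv:2402.08909 — 2 statements merged into one kernel-verified Lean document; each statement's English description precedes it below -/
import Mathlib

section
/- Let φ > 0, V > 0, and Δt > 0 be real numbers. Let E₁ and E₂ be finite index sets, and let F : E₁ → ℝ (outflow fluxes) and G : E₂ → ℝ with G_e ≤ 0 for all e ∈ E₂ (inflow fluxes), satisfying the local mass conservation Σ_{e ∈ E₁} F_e + Σ_{e ∈ E₂} G_e = 0 and the time-step restriction Δt · Σ_{e ∈ E₁} F_e ≤ V φ. Let c ≤ 1 and let c^{out} : E₂ → ℝ with c^{out}_e ≤ 1 for all e ∈ E₂. Then the explicit update c' := c − (Δt/(V φ)) ( c · Σ_{e ∈ E₁} F_e + Σ_{e ∈ E₂} G_e · c^{out}_e ) satisfies c' ≤ 1. -/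
/-- Local upper-bound preservation for the explicit upwind scheme: under
local mass conservation and the time-step restriction, the explicit update
of the cell concentration stays bounded by one. -/
theorem explicit_upwind_upper_bound
    (φ V Δt : ℝ) (hφ : 0 < φ) (hV : 0 < V) (hΔt : 0 < Δt)
    {E₁ E₂ : Type*} [Fintype E₁] [Fintype E₂]
    (F : E₁ → ℝ)
    (G : E₂ → ℝ) (hG : ∀ e, G e ≤ 0)
    (hcons : (∑ e, F e) + (∑ e, G e) = 0)
    (hstep : Δt * (∑ e, F e) ≤ V * φ)
    (c : ℝ) (hc : c ≤ 1)
    (cout : E₂ → ℝ) (hcout : ∀ e, cout e ≤ 1) :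
    c - (Δt / (V * φ)) * (c * (∑ e, F e) + ∑ e, G e * cout e) ≤ 1 := by
  have hVφ : (0:ℝ) < V * φ := mul_pos hV hφ
  set k : ℝ := Δt / (V * φ) with hk
  have hk0 : 0 ≤ k := le_of_lt (div_pos hΔt hVφ)
  have h1 : k * (∑ e, F e) ≤ 1 := by
    rw [hk, div_mul_eq_mul_div, div_le_one hVφ]
    exact hstep
  have hG1 : ∑ e, G e = -∑ e, F e := by linarith
  have key : 1 - (c - k * (c * (∑ e, F e) + ∑ e, G e * cout e))
      = (1 - c) * (1 - k * (∑ e, F e)) + k * ∑ e, G e * (cout e - 1) := by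
    have : ∑ e, G e * (cout e - 1) = (∑ e, G e * cout e) - ∑ e, G e := by
      rw [← Finset.sum_sub_distrib]
      congr 1; ext e; ring
    rw [this, hG1]; ring
  have hterm : 0 ≤ ∑ e, G e * (cout e - 1) :=
    Finset.sum_nonneg fun e _ =>
      by nlinarith [hG e, hcout e]
  nlinarith [mul_nonneg (sub_nonneg.mpr hc) (sub_nonneg.mpr h1), mul_nonneg hk0 hterm]
end

section
/- Let E be a finite-dimensional real normed affine space and let b be an affine basis of E indexed by a nonempty finite type, with barycentric coordinate functions λ_i = b.coord i. Then for every point x lying in the frontier (topological boundary) of the convex hull of the basis points, the product Π_i λ_i(x) equals 0; i.e., the bubble function Π_i λ_i vanishes on the boundary of the simplex spanned by the basis points. -/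
open Set

theorem AffineBasis.frontier_convexHull {ι E : Type*} [Finite ι] [NormedAddCommGroup E]
    [NormedSpace ℝ E] (b : AffineBasis ι ℝ E) :
    frontier (convexHull ℝ (range b)) = {x | (∀ i, 0 ≤ b.coord i x) ∧ ∃ i, b.coord i x = 0} := by
  have hclosed : IsClosed (convexHull ℝ (range b)) :=
    ((finite_range b).isCompact_convexHull ℝ).isClosed
  ext x
  rw [frontier, hclosed.closure_eq, b.interior_convexHull, b.convexHull_eq_nonneg_coord]
  simp only [mem_sdiff, mem_ofPred_eq, not_forall, not_lt]
  refine and_congr_right fun hnonneg => exists_congr fun i => ?_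
  exact ⟨fun hi => le_antisymm hi (hnonneg i), le_of_eq⟩

theorem bubble_vanishes_on_boundary_general
    {ι : Type*} [Fintype ι]
    {E : Type*} [NormedAddCommGroup E] [NormedSpace ℝ E]
    (b : AffineBasis ι ℝ E) :
    ∀ x ∈ frontier (convexHull ℝ (Set.range b)), (∏ i, b.coord i x) = 0 := by
  intro x hx
  rw [b.frontier_convexHull] at hx
  obtain ⟨-, i, hi⟩ := hx
  exact Finset.prod_eq_zero (Finset.mem_univ i) hi

/-- The bubble function, i.e. the product of all barycentric coordinate
functions of an affine basis, vanishes on the topological boundary of the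
simplex spanned by the basis points. -/
theorem bubble_vanishes_on_boundary
    {ι : Type*} [Fintype ι] [Nonempty ι]
    {E : Type*} [NormedAddCommGroup E] [NormedSpace ℝ E] [FiniteDimensional ℝ E]
    (b : AffineBasis ι ℝ E) :
    ∀ x ∈ frontier (convexHull ℝ (Set.range b)), (∏ i, b.coord i x) = 0 :=
  bubble_vanishes_on_boundary_general b
end
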